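/- arXiv:2412.01870 — 2 statements merged into one kernel-verified Lean document; each statement's English description precedes it below -/
import Mathlib

section
/- Suppose F : ℂ → ℂ is holomorphic on an open set D. Then for a + bρ + cρ² ∈ A₃ with a ∈ D and a closed rectifiable contour γ in D winding once around a, one has (1/(2πi)) ∮_γ F(t)(t − (a + bρ + cρ²))⁻¹ dt = F(a) + bF′(a)ρ + (cF′(a) + (b²/2)F″(a))ρ². -/
/-!
In `A₃` the element `t − (a + bρ + cρ²) = (t − a) − (bρ + cρ²)` is a unit plus a nilpotent as soon
as `t ≠ a`, so its inverse is a finite geometric series: its components are combinations of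
`(t − a)⁻¹`, `(t − a)⁻²` and `(t − a)⁻³`. Integrating componentwise over the circle, the three
resulting integrals are the Cauchy integral formulas for `F(a)`, `F′(a)` and `F″(a)/2!`.
-/

noncomputable section

/-- The commutative algebra `A₃ = ℂ[ρ]/(ρ³)`, with basis `{1, ρ, ρ²}`;
an element `⟨a, b, c⟩` represents `a + b·ρ + c·ρ²`. -/
@[ext] structure A3 : Type where
  a : ℂ
  b : ℂ
  c : ℂ

namespace A3

instance : Zero A3 := ⟨⟨0, 0, 0⟩⟩
instance : One A3 := ⟨⟨1, 0, 0⟩⟩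
instance : Add A3 := ⟨fun x y => ⟨x.a + y.a, x.b + y.b, x.c + y.c⟩⟩
instance : Neg A3 := ⟨fun x => ⟨-x.a, -x.b, -x.c⟩⟩
instance : Mul A3 :=
  ⟨fun x y => ⟨x.a * y.a, x.a * y.b + x.b * y.a, x.a * y.c + x.b * y.b + x.c * y.a⟩⟩

@[simp] lemma zero_a : (0 : A3).a = 0 := rfl
@[simp] lemma zero_b : (0 : A3).b = 0 := rfl
@[simp] lemma zero_c : (0 : A3).c = 0 := rfl
@[simp] lemma one_a : (1 : A3).a = 1 := rfl
@[simp] lemma one_b : (1 : A3).b = 0 := rfl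
@[simp] lemma one_c : (1 : A3).c = 0 := rfl
@[simp] lemma add_a (x y : A3) : (x + y).a = x.a + y.a := rfl
@[simp] lemma add_b (x y : A3) : (x + y).b = x.b + y.b := rfl
@[simp] lemma add_c (x y : A3) : (x + y).c = x.c + y.c := rfl
@[simp] lemma neg_a (x : A3) : (-x).a = -x.a := rfl
@[simp] lemma neg_b (x : A3) : (-x).b = -x.b := rfl
@[simp] lemma neg_c (x : A3) : (-x).c = -x.c := rfl
@[simp] lemma mul_a (x y : A3) : (x * y).a = x.a * y.a := rfl
@[simp] lemma mul_b (x y : A3) : (x * y).b = x.a * y.b + x.b * y.a := rfl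
@[simp] lemma mul_c (x y : A3) : (x * y).c = x.a * y.c + x.b * y.b + x.c * y.a := rfl

instance : CommRing A3 where
  add_assoc x y z := by ext <;> simp <;> ring
  zero_add x := by ext <;> simp
  add_zero x := by ext <;> simp
  add_comm x y := by ext <;> simp <;> ring
  neg_add_cancel x := by ext <;> simp
  left_distrib x y z := by ext <;> simp <;> ring
  right_distrib x y z := by ext <;> simp <;> ring
  zero_mul x := by ext <;> simp
  mul_zero x := by ext <;> simp
  mul_assoc x y z := by ext <;> simp <;> ring
  one_mul x := by ext <;> simp
  mul_one x := by ext <;> simp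
  mul_comm x y := by ext <;> simp <;> ring
  nsmul := fun n x => ⟨n • x.a, n • x.b, n • x.c⟩
  nsmul_zero x := by ext <;> exact zero_nsmul _
  nsmul_succ n x := by ext <;> exact succ_nsmul _ _
  zsmul := fun n x => ⟨n • x.a, n • x.b, n • x.c⟩
  zsmul_zero' x := by ext <;> exact zero_zsmul _
  zsmul_succ' n x := by ext <;> exact SubNegMonoid.zsmul_succ' _ _
  zsmul_neg' n x := by ext <;> exact SubNegMonoid.zsmul_neg' _ _

/-- The canonical embedding `ℂ → A₃`. -/
def toA3 : ℂ →+* A3 where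
  toFun r := ⟨r, 0, 0⟩
  map_one' := rfl
  map_mul' x y := by ext <;> simp
  map_zero' := rfl
  map_add' x y := by ext <;> simp

instance : Algebra ℂ A3 := toA3.toAlgebra
instance : Algebra ℝ A3 := (toA3.comp (algebraMap ℝ ℂ)).toAlgebra

@[simp] lemma smulC_a (r : ℂ) (x : A3) : (r • x).a = r * x.a := by
  show (toA3 r * x).a = _ ; simp [toA3]
@[simp] lemma smulC_b (r : ℂ) (x : A3) : (r • x).b = r * x.b := by
  show (toA3 r * x).b = _ ; simp [toA3]
@[simp] lemma smulC_c (r : ℂ) (x : A3) : (r • x).c = r * x.c := by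
  show (toA3 r * x).c = _ ; simp [toA3]
@[simp] lemma smulR_a (r : ℝ) (x : A3) : (r • x).a = (r : ℂ) * x.a := by
  show ((toA3.comp (algebraMap ℝ ℂ)) r * x).a = _ ; simp [toA3]
@[simp] lemma smulR_b (r : ℝ) (x : A3) : (r • x).b = (r : ℂ) * x.b := by
  show ((toA3.comp (algebraMap ℝ ℂ)) r * x).b = _ ; simp [toA3]
@[simp] lemma smulR_c (r : ℝ) (x : A3) : (r • x).c = (r : ℂ) * x.c := by
  show ((toA3.comp (algebraMap ℝ ℂ)) r * x).c = _ ; simp [toA3]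

/-- The nilpotent generator `ρ`. -/
def ρ : A3 := ⟨0, 1, 0⟩

lemma rho_sq : ρ ^ 2 = ⟨0, 0, 1⟩ := by ext <;> simp [ρ, sq]
lemma rho_cubed : ρ ^ 3 = 0 := by ext <;> simp [ρ, pow_succ, sq]

/-- The element `a + b·ρ + c·ρ²` of `A₃`. -/
def el (a b c : ℂ) : A3 := algebraMap ℂ A3 a + b • ρ + c • ρ ^ 2

lemma el_def (a b c : ℂ) : el a b c = ⟨a, b, c⟩ := by
  simp only [el, rho_sq]; ext <;> simp [ρ] <;> simp [Algebra.algebraMap_eq_smul_one, toA3]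

/-- The Euclidean norm `‖a + bρ + cρ²‖ = √(|a|² + |b|² + |c|²)`. -/
def nrm (x : A3) : ℝ :=
  Real.sqrt (‖x.a‖ ^ 2 + ‖x.b‖ ^ 2 + ‖x.c‖ ^ 2)

/-- The topology of `A₃` (that of the Euclidean norm, i.e. of `ℂ³`). -/
instance : TopologicalSpace A3 :=
  TopologicalSpace.induced (fun x => (x.a, x.b, x.c)) inferInstance

/-- The functional `f(a + bρ + cρ²) = a`. -/
def fl (x : A3) : ℂ := x.a

/-- The set `I = {λ₁ρ + λ₂ρ² : λ₁, λ₂ ∈ ℂ}`. -/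
def Iset : Set A3 := {x | ∃ l₁ l₂ : ℂ, x = l₁ • ρ + l₂ • ρ ^ 2}

/-- The kernel of `f`, i.e. the ideal `I`, as a real subspace of `A₃`. -/
def Iker : Submodule ℝ A3 where
  carrier := {x | x.a = 0}
  add_mem' := by intro x y hx hy; simp_all [Set.mem_setOf_eq]
  zero_mem' := rfl
  smul_mem' := by intro r x hx; simp_all [Set.mem_setOf_eq]

/-- Componentwise contour integral over the circle `C(center, r)` of an `A₃`-valued function. -/
def cInt (g : ℂ → A3) (center : ℂ) (r : ℝ) : A3 :=
  ⟨∮ z in C(center, r), (g z).a, ∮ z in C(center, r), (g z).b, ∮ z in C(center, r), (g z).c⟩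

end A3

open Complex Metric

theorem circleIntegrable_one_div_sub_center_pow_smul {E : Type*} [NormedAddCommGroup E]
    [NormedSpace ℂ E] {f : ℂ → E} {c : ℂ} {R : ℝ} (hR : 0 < R)
    (hf : ContinuousOn f (sphere c R)) (n : ℕ) :
    CircleIntegrable (fun z => (1 / (z - c) ^ n) • f z) c R := by
  refine ContinuousOn.circleIntegrable hR.le (ContinuousOn.smul ?_ hf)
  exact continuousOn_const.div (by fun_prop) fun z hz =>
    pow_ne_zero n (sub_ne_zero.2 (ne_of_mem_sphere hz hR.ne'))

namespace A3

theorem inverse_eq_of_a_ne_zero {x : A3} (hx : x.a ≠ 0) :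
    Ring.inverse x = ⟨x.a⁻¹, -x.b * x.a⁻¹ ^ 2, -x.c * x.a⁻¹ ^ 2 + x.b ^ 2 * x.a⁻¹ ^ 3⟩ := by
  have hmul : x * ⟨x.a⁻¹, -x.b * x.a⁻¹ ^ 2, -x.c * x.a⁻¹ ^ 2 + x.b ^ 2 * x.a⁻¹ ^ 3⟩ = 1 := by
    ext <;> simp only [mul_a, mul_b, mul_c, one_a, one_b, one_c] <;> field_simp <;> ring
  exact Ring.inverse_unit (Units.mkOfMulEqOne _ _ hmul)

theorem toA3_sub_el (t a b c : ℂ) : toA3 t - el a b c = ⟨t - a, -b, -c⟩ := by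
  rw [el_def, sub_eq_add_neg]
  ext <;> simp [toA3, sub_eq_add_neg]

theorem smul_inverse_toA3_sub_el (w : ℂ) {t a : ℂ} (h : t ≠ a) (b c : ℂ) :
    w • Ring.inverse (toA3 t - el a b c) =
      ⟨(1 / (t - a) ^ 1) • w, b * ((1 / (t - a) ^ 2) • w),
        c * ((1 / (t - a) ^ 2) • w) + b ^ 2 * ((1 / (t - a) ^ 3) • w)⟩ := by
  rw [toA3_sub_el, inverse_eq_of_a_ne_zero (sub_ne_zero.2 h)]
  ext <;> simp only [smulC_a, smulC_b, smulC_c, smul_eq_mul, one_div, inv_pow, pow_one] <;> ring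

theorem cInt_eq_of_eqOn_sphere {g : ℂ → A3} {p q s : ℂ → ℂ} {c : ℂ} {R : ℝ} (hR : 0 ≤ R)
    (h : ∀ z ∈ sphere c R, g z = ⟨p z, q z, s z⟩) :
    cInt g c R = ⟨∮ z in C(c, R), p z, ∮ z in C(c, R), q z, ∮ z in C(c, R), s z⟩ := by
  unfold cInt
  congr 1 <;> exact circleIntegral.integral_congr hR fun z hz => by rw [h z hz]

end A3

theorem stmt9_general (D : Set ℂ) (F : ℂ → ℂ) (hF : DifferentiableOn ℂ F D)
    (a b c : ℂ) (r : ℝ) (hr : 0 < r) (hball : Metric.closedBall a r ⊆ D) :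
    (2 * Real.pi * Complex.I : ℂ)⁻¹ •
      A3.cInt (fun t => F t • Ring.inverse (A3.toA3 t - A3.el a b c)) a r =
    A3.el (F a) (b * deriv F a) (c * deriv F a + b ^ 2 / 2 * deriv (deriv F) a) := by
  have hFr : DifferentiableOn ℂ F (closedBall a r) := hF.mono hball
  have cauchy := hFr.circleIntegral_one_div_sub_center_pow_smul hr
  have integrable :=
    circleIntegrable_one_div_sub_center_pow_smul hr (hFr.continuousOn.mono sphere_subset_closedBall)
  rw [A3.cInt_eq_of_eqOn_sphere hr.le fun t ht =>
      A3.smul_inverse_toA3_sub_el (F t) (ne_of_mem_sphere ht hr.ne') b c,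
    circleIntegral.integral_add (f := fun z => c * ((1 / (z - a) ^ 2) • F z))
      (g := fun z => b ^ 2 * ((1 / (z - a) ^ 3) • F z))
      (integrable 2).const_smul (integrable 3).const_smul,
    circleIntegral.integral_const_mul, circleIntegral.integral_const_mul,
    circleIntegral.integral_const_mul, cauchy 0, cauchy 1, cauchy 2, A3.el_def]
  ext <;> simp only [A3.smulC_a, A3.smulC_b, A3.smulC_c, smul_eq_mul, iteratedDeriv_zero,
    iteratedDeriv_succ, Nat.factorial_zero, Nat.factorial_one, Nat.factorial_two, Nat.cast_one,
    Nat.cast_ofNat] <;> field_simp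

/-- the Cauchy-type integral of `F(t)(t − (a + bρ + cρ²))⁻¹` over a circle
around `a` in `D` equals `F(a) + bF′(a)ρ + (cF′(a) + (b²/2)F″(a))ρ²`. -/
theorem stmt9 (D : Set ℂ) (hD : IsOpen D) (F : ℂ → ℂ) (hF : DifferentiableOn ℂ F D)
    (a b c : ℂ) (r : ℝ) (hr : 0 < r) (hball : Metric.closedBall a r ⊆ D) :
    (2 * Real.pi * Complex.I : ℂ)⁻¹ •
      A3.cInt (fun t => F t • Ring.inverse (A3.toA3 t - A3.el a b c)) a r =
    A3.el (F a) (b * deriv F a) (c * deriv F a + b ^ 2 / 2 * deriv (deriv F) a) :=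
  stmt9_general D F hF a b c r hr hball

end
end

section
/- Let D ⊆ ℂ be open, F : D → ℂ holomorphic, and define Φ : {(x, b, c) : x ∈ D, b, c ∈ ℂ} → A₃ by Φ(x + bρ + cρ²) = F(x) + bF′(x)ρ + (cF′(x) + (b²/2)F″(x))ρ². Then for every ζ with f(ζ) ∈ D and every h ∈ A₃, the Gâteaux limit lim_{δ→0⁺} (Φ(ζ + δh) − Φ(ζ))/δ exists and equals h·Φ′(ζ), where Φ′ is defined by the same formula with F replaced by F′. -/
noncomputable section

/-!
Along the real line `δ ↦ ζ + δ • h` each coordinate of `Φ` is a polynomial in `δ` times `F`,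
`F′` or `F″` evaluated at `ζ.a + δ * h.a`. Holomorphy on the open set `D` makes `F`, `F′`, `F″`
complex differentiable at `ζ.a`, so the chain and product rules give the derivative of each
coordinate at `δ = 0`, and these three derivatives are the coordinates of `h * Φ′ ζ`.
-/

open Filter Topology

namespace A3

@[simp] lemma sub_a (x y : A3) : (x - y).a = x.a - y.a := rfl
@[simp] lemma sub_b (x y : A3) : (x - y).b = x.b - y.b := rfl
@[simp] lemma sub_c (x y : A3) : (x - y).c = x.c - y.c := rfl

lemma tendsto_nhds_of_components {α : Type*} {l : Filter α} {g : α → A3} {x : A3}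
    (ha : Tendsto (fun t => (g t).a) l (𝓝 x.a))
    (hb : Tendsto (fun t => (g t).b) l (𝓝 x.b))
    (hc : Tendsto (fun t => (g t).c) l (𝓝 x.c)) :
    Tendsto g l (𝓝 x) := by
  rw [show (instTopologicalSpace : TopologicalSpace A3) =
      .induced (fun x : A3 => (x.a, x.b, x.c)) inferInstance from rfl,
    nhds_induced, tendsto_comap_iff]
  exact ha.prodMk_nhds (hb.prodMk_nhds hc)

lemma tendsto_slope_of_hasDerivAt_components {g : ℝ → A3} {L : A3}
    (ha : HasDerivAt (fun δ => (g δ).a) L.a 0)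
    (hb : HasDerivAt (fun δ => (g δ).b) L.b 0)
    (hc : HasDerivAt (fun δ => (g δ).c) L.c 0) :
    Tendsto (fun δ : ℝ => δ⁻¹ • (g δ - g 0)) (𝓝[≠] 0) (𝓝 L) := by
  refine tendsto_nhds_of_components ?_ ?_ ?_
  · simpa [Complex.real_smul] using hasDerivAt_iff_tendsto_slope_zero.mp ha
  · simpa [Complex.real_smul] using hasDerivAt_iff_tendsto_slope_zero.mp hb
  · simpa [Complex.real_smul] using hasDerivAt_iff_tendsto_slope_zero.mp hc

end A3

lemma hasDerivAt_const_add_ofReal_mul (a p : ℂ) (t : ℝ) :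
    HasDerivAt (fun δ : ℝ => a + δ * p) p t := by
  simpa using (Complex.ofRealCLM.hasDerivAt.mul_const p).const_add a

lemma HasDerivAt.comp_const_add_ofReal_mul {G : ℂ → ℂ} {G' a : ℂ} (p : ℂ)
    (hG : HasDerivAt G G' a) :
    HasDerivAt (fun δ : ℝ => G (a + δ * p)) (p * G') 0 := by
  have hG : HasDerivAt G G' (a + (0 : ℝ) * p) := by simpa using hG
  simpa [Function.comp_def] using hG.scomp (0 : ℝ) (hasDerivAt_const_add_ofReal_mul a p 0)

namespace A3

def mainExt (F : ℂ → ℂ) (ζ : A3) : A3 :=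
  ⟨F ζ.a, ζ.b * deriv F ζ.a, ζ.c * deriv F ζ.a + ζ.b ^ 2 / 2 * deriv (deriv F) ζ.a⟩

theorem tendsto_slope_mainExt {F : ℂ → ℂ} {ζ : A3} (h : A3)
    (hF : DifferentiableAt ℂ F ζ.a) (hF' : DifferentiableAt ℂ (deriv F) ζ.a)
    (hF'' : DifferentiableAt ℂ (deriv (deriv F)) ζ.a) :
    Tendsto (fun δ : ℝ => δ⁻¹ • (mainExt F (ζ + δ • h) - mainExt F ζ)) (𝓝[≠] 0)
      (𝓝 (h * mainExt (deriv F) ζ)) := by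
  have hline (δ : ℝ) : ζ + δ • h = ⟨ζ.a + δ * h.a, ζ.b + δ * h.b, ζ.c + δ * h.c⟩ := by
    ext <;> simp
  rw [show mainExt F ζ = mainExt F (ζ + (0 : ℝ) • h) by simp]
  have dF := hF.hasDerivAt.comp_const_add_ofReal_mul h.a
  have dF' := hF'.hasDerivAt.comp_const_add_ofReal_mul h.a
  have dF'' := hF''.hasDerivAt.comp_const_add_ofReal_mul h.a
  have dB := hasDerivAt_const_add_ofReal_mul ζ.b h.b 0
  have dC := hasDerivAt_const_add_ofReal_mul ζ.c h.c 0
  refine tendsto_slope_of_hasDerivAt_components ?_ ?_ ?_ <;> simp only [hline, mainExt]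
  · exact dF.congr_deriv (by simp)
  · exact (dB.mul dF').congr_deriv (by simp; ring)
  · exact ((dC.mul dF').add (((dB.pow 2).div_const 2).mul dF'')).congr_deriv (by simp; ring)

end A3

/-- the main extension `Φ` of a holomorphic `F` has a Gâteaux derivative
`Φ′` (given by the same formula with `F` replaced by `F′`) at every point over `D`. -/
theorem stmt10 (D : Set ℂ) (hD : IsOpen D) (F : ℂ → ℂ) (hF : DifferentiableOn ℂ F D)
    (Φ Φ' : A3 → A3)
    (hΦ : ∀ ζ : A3, Φ ζ =
      A3.el (F ζ.a) (ζ.b * deriv F ζ.a)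
        (ζ.c * deriv F ζ.a + ζ.b ^ 2 / 2 * deriv (deriv F) ζ.a))
    (hΦ' : ∀ ζ : A3, Φ' ζ =
      A3.el (deriv F ζ.a) (ζ.b * deriv (deriv F) ζ.a)
        (ζ.c * deriv (deriv F) ζ.a + ζ.b ^ 2 / 2 * deriv (deriv (deriv F)) ζ.a)) :
    ∀ ζ : A3, A3.fl ζ ∈ D → ∀ h : A3,
      Filter.Tendsto (fun δ : ℝ => δ⁻¹ • (Φ (ζ + δ • h) - Φ ζ))
        (nhdsWithin 0 (Set.Ioi 0)) (nhds (h * Φ' ζ)) := by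
  obtain rfl : Φ = A3.mainExt F := funext fun ζ => (hΦ ζ).trans (A3.el_def _ _ _)
  obtain rfl : Φ' = A3.mainExt (deriv F) := funext fun ζ => (hΦ' ζ).trans (A3.el_def _ _ _)
  intro ζ hζ h
  have hF : AnalyticOnNhd ℂ F D := hF.analyticOnNhd hD
  exact (A3.tendsto_slope_mainExt h (hF ζ.a hζ).differentiableAt
    (hF.deriv ζ.a hζ).differentiableAt (hF.deriv.deriv ζ.a hζ).differentiableAt).mono_left
    (nhdsGT_le_nhdsNE 0)
end
end
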